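/- arXiv:1706.07767 — 2 statements merged into one kernel-verified Lean document; each statement's English description precedes it below -/
import Mathlib

section
/- Fix α ∈ (0,4], e > 0, f > 0. For y > 0 define S(t) = ((y−t)^α/2+f)^{−e−1/α} − ((y+t)^α/2+f)^{−e−1/α} and V(t) = 4α(e+1/α) ((y/2)^α/2+f)^{−e−1/α} · (t/y). Then for all sufficiently large y and all t ∈ (0, y/2), S(t) < V(t). -/
open Real

/-- Derivative of `x ↦ (x ^ a / 2 + f) ^ p` at a positive point. -/
lemma hasDerivAt_Sg (a f p x : ℝ) (hf : 0 < f) (hx : 0 < x) :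
    HasDerivAt (fun x : ℝ => (x ^ a / 2 + f) ^ p)
      ((a * x ^ (a - 1) / 2) * p * (x ^ a / 2 + f) ^ (p - 1)) x := by
  have hG : 0 < x ^ a / 2 + f := by positivity
  exact (((Real.hasDerivAt_rpow_const (Or.inl hx.ne')).div_const 2).add_const f).rpow_const
    (Or.inl hG.ne')

/-- Eventual antitonicity of `x ↦ x ^ (a-1) * (x^a/2+f) ^ (-e-1/a-1)`. -/
lemma Sh_anti (a e f : ℝ) (ha : 0 < a) (he : 0 < e) (hf : 0 < f) :
    ∃ X : ℝ, 1 ≤ X ∧ ∀ u v : ℝ, X ≤ u → u ≤ v →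
      v ^ (a - 1) * (v ^ a / 2 + f) ^ (-e - 1 / a - 1)
        ≤ u ^ (a - 1) * (u ^ a / 2 + f) ^ (-e - 1 / a - 1) := by
  set q : ℝ := -e - 1 / a - 1 with hq
  set B : ℝ := 2 * (|a - 1| * f + 1) / (2 + a * e) with hB
  have h2ae : 0 < 2 + a * e := by positivity
  have hBpos : 0 < B := by positivity
  set X : ℝ := max (B ^ (1 / a)) 1 with hXdef
  have hX1 : (1 : ℝ) ≤ X := le_max_right _ _
  have hXB : B ^ (1 / a) ≤ X := le_max_left _ _
  refine ⟨X, hX1, ?_⟩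
  have hderiv : ∀ x : ℝ, 0 < x →
      HasDerivAt (fun x : ℝ => x ^ (a - 1) * (x ^ a / 2 + f) ^ q)
        ((a - 1) * x ^ (a - 1 - 1) * (x ^ a / 2 + f) ^ q
          + x ^ (a - 1) * ((a * x ^ (a - 1) / 2) * q * (x ^ a / 2 + f) ^ (q - 1))) x := by
    intro x hx
    exact (Real.hasDerivAt_rpow_const (Or.inl hx.ne')).mul (hasDerivAt_Sg a f q x hf hx)
  have key : StrictAntiOn (fun x : ℝ => x ^ (a - 1) * (x ^ a / 2 + f) ^ q) (Set.Ici X) := by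
    apply strictAntiOn_of_deriv_neg (convex_Ici X)
    · intro x hx
      have hx0 : 0 < x := lt_of_lt_of_le one_pos (hX1.trans hx)
      exact (hderiv x hx0).continuousAt.continuousWithinAt
    · intro x hx
      rw [interior_Ici] at hx
      have hxX : X ≤ x := le_of_lt hx
      have hx0 : 0 < x := lt_of_lt_of_le one_pos (hX1.trans hxX)
      have hG : 0 < x ^ a / 2 + f := by positivity
      rw [(hderiv x hx0).deriv]
      -- factor the derivative
      have e1 : x ^ (a - 1 - 1) * (x ^ a) = x ^ (a - 1) * x ^ (a - 1) := by
        rw [← Real.rpow_add hx0, ← Real.rpow_add hx0]; ring_nf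
      have e2 : (x ^ a / 2 + f) ^ (q - 1) * (x ^ a / 2 + f) = (x ^ a / 2 + f) ^ q := by
        rw [← Real.rpow_add_one hG.ne']; ring_nf
      have hfac : (a - 1) * x ^ (a - 1 - 1) * (x ^ a / 2 + f) ^ q
            + x ^ (a - 1) * ((a * x ^ (a - 1) / 2) * q * (x ^ a / 2 + f) ^ (q - 1))
          = x ^ (a - 1 - 1) * (x ^ a / 2 + f) ^ (q - 1)
            * ((a - 1) * (x ^ a / 2 + f) + x ^ a * (a / 2) * q) := by
        rw [mul_add]
        congr 1
        · rw [← e2]; ring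
        · have : x ^ (a - 1 - 1) * (x ^ a / 2 + f) ^ (q - 1) * (x ^ a * (a / 2) * q)
              = (x ^ (a - 1 - 1) * x ^ a) * ((a / 2) * q * (x ^ a / 2 + f) ^ (q - 1)) := by ring
          rw [this, e1]; ring
      rw [hfac]
      -- the bracket is negative
      have hxa : B ≤ x ^ a := by
        have h1 : (B ^ (1 / a)) ^ a ≤ X ^ a :=
          Real.rpow_le_rpow (Real.rpow_nonneg hBpos.le _) hXB ha.le
        have h2 : X ^ a ≤ x ^ a :=
          Real.rpow_le_rpow (by linarith) hxX ha.le
        have h3 : (B ^ (1 / a)) ^ a = B := by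
          rw [← Real.rpow_mul hBpos.le, one_div, inv_mul_cancel₀ ha.ne', Real.rpow_one]
        linarith
      have hbr : (a - 1) * (x ^ a / 2 + f) + x ^ a * (a / 2) * q < 0 := by
        have hq' : (a - 1) * (x ^ a / 2 + f) + x ^ a * (a / 2) * q
            = (a - 1) * f - (2 + a * e) / 2 * x ^ a := by
          rw [hq]; field_simp; ring
        rw [hq']
        have h4 : |a - 1| * f + 1 ≤ (2 + a * e) / 2 * x ^ a := by
          have := mul_le_mul_of_nonneg_left hxa (by positivity : (0:ℝ) ≤ (2 + a * e) / 2)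
          rw [hB] at this
          calc |a - 1| * f + 1 = (2 + a * e) / 2 * (2 * (|a - 1| * f + 1) / (2 + a * e)) := by
                field_simp
            _ ≤ (2 + a * e) / 2 * x ^ a := this
        have h5 : (a - 1) * f ≤ |a - 1| * f :=
          mul_le_mul_of_nonneg_right (le_abs_self _) hf.le
        linarith
      have hpos : 0 < x ^ (a - 1 - 1) * (x ^ a / 2 + f) ^ (q - 1) := by positivity
      exact mul_neg_of_pos_of_neg hpos hbr
  intro u v hu huv
  rcases eq_or_lt_of_le huv with rfl | hlt
  · exact le_rfl
  · exact (key (Set.mem_Ici.2 hu) (Set.mem_Ici.2 (hu.trans huv)) hlt).le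

theorem S_lt_V (a e f : ℝ) (ha : 0 < a) (ha4 : a ≤ 4) (he : 0 < e) (hf : 0 < f) :
    ∃ Y : ℝ, 0 < Y ∧ ∀ y : ℝ, Y < y → ∀ t ∈ Set.Ioo 0 (y / 2),
      ((y - t) ^ a / 2 + f) ^ (-e - 1 / a) - ((y + t) ^ a / 2 + f) ^ (-e - 1 / a)
        < 4 * a * (e + 1 / a) * ((y / 2) ^ a / 2 + f) ^ (-e - 1 / a) * (t / y) := by
  obtain ⟨X, hX1, hanti⟩ := Sh_anti a e f ha he hf
  refine ⟨2 * X, by linarith, ?_⟩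
  intro y hy t ⟨ht0, hty⟩
  set p : ℝ := -e - 1 / a with hp
  have hy2X : X < y / 2 := by linarith
  have hy0 : 0 < y := by linarith
  have hyt0 : 0 < y - t := by linarith
  have hab : y - t < y + t := by linarith
  -- mean value theorem
  obtain ⟨c, hc, hslope⟩ := exists_hasDerivAt_eq_slope
    (fun x : ℝ => (x ^ a / 2 + f) ^ p)
    (fun x : ℝ => (a * x ^ (a - 1) / 2) * p * (x ^ a / 2 + f) ^ (p - 1)) hab
    (fun x hx => (hasDerivAt_Sg a f p x hf (lt_of_lt_of_le hyt0 hx.1)).continuousAt.continuousWithinAt)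
    (fun x hx => hasDerivAt_Sg a f p x hf (lt_of_lt_of_le hyt0 hx.1.le))
  have hc0 : 0 < c := lt_trans hyt0 hc.1
  have hcy2 : y / 2 ≤ c := by have := hc.1; linarith
  have hsub : (y + t) - (y - t) = 2 * t := by ring
  have hS : ((y - t) ^ a / 2 + f) ^ p - ((y + t) ^ a / 2 + f) ^ p
      = 2 * t * (-((a * c ^ (a - 1) / 2) * p * (c ^ a / 2 + f) ^ (p - 1))) := by
    have h2t : (0:ℝ) < 2 * t := by linarith
    rw [hsub] at hslope
    have hD := (eq_div_iff h2t.ne').mp hslope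
    linarith [hD]
  have hEq : 2 * t * (-((a * c ^ (a - 1) / 2) * p * (c ^ a / 2 + f) ^ (p - 1)))
      = t * a * (e + 1 / a) * (c ^ (a - 1) * (c ^ a / 2 + f) ^ (p - 1)) := by
    rw [hp]; ring
  have hh : c ^ (a - 1) * (c ^ a / 2 + f) ^ (-e - 1 / a - 1)
      ≤ (y / 2) ^ (a - 1) * ((y / 2) ^ a / 2 + f) ^ (-e - 1 / a - 1) :=
    hanti (y / 2) c hy2X.le hcy2
  have hp1 : p - 1 = -e - 1 / a - 1 := by rw [hp]
  have hmain : t * a * (e + 1 / a) * ((y / 2) ^ (a - 1) * ((y / 2) ^ a / 2 + f) ^ (p - 1))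
      < 4 * a * (e + 1 / a) * ((y / 2) ^ a / 2 + f) ^ p * (t / y) := by
    have hy20 : 0 < y / 2 := by linarith
    have hG : 0 < (y / 2) ^ a / 2 + f := by positivity
    have hGp1 : (0:ℝ) < ((y / 2) ^ a / 2 + f) ^ (p - 1) := Real.rpow_pos_of_pos hG _
    have hGp : ((y / 2) ^ a / 2 + f) ^ p = ((y / 2) ^ a / 2 + f) ^ (p - 1) * ((y / 2) ^ a / 2 + f) := by
      rw [← Real.rpow_add_one hG.ne']; ring_nf
    have hya : (y / 2) ^ a = (y / 2) ^ (a - 1) * (y / 2) := by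
      rw [← Real.rpow_add_one hy20.ne']; ring_nf
    have hkey : y * (y / 2) ^ (a - 1) < 4 * ((y / 2) ^ a / 2 + f) := by
      nlinarith [hya]
    have hpos : 0 < t * a * (e + 1 / a) := by
      have : 0 < e + 1 / a := by positivity
      positivity
    have hinner : (y / 2) ^ (a - 1) * ((y / 2) ^ a / 2 + f) ^ (p - 1)
        < ((y / 2) ^ a / 2 + f) ^ (p - 1) * (4 * ((y / 2) ^ a / 2 + f) * y⁻¹) := by
      rw [mul_comm ((y / 2) ^ (a - 1))]
      apply mul_lt_mul_of_pos_left _ hGp1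
      rw [show 4 * ((y / 2) ^ a / 2 + f) * y⁻¹ = 4 * ((y / 2) ^ a / 2 + f) / y by ring,
        lt_div_iff₀ hy0]
      nlinarith [hkey]
    rw [hGp, div_eq_mul_inv t y]
    have hform : 4 * a * (e + 1 / a) * (((y / 2) ^ a / 2 + f) ^ (p - 1) * ((y / 2) ^ a / 2 + f)) * (t * y⁻¹)
        = t * a * (e + 1 / a) * (((y / 2) ^ a / 2 + f) ^ (p - 1) * (4 * ((y / 2) ^ a / 2 + f) * y⁻¹)) := by
      ring
    rw [hform]
    exact mul_lt_mul_of_pos_left hinner hpos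
  calc ((y - t) ^ a / 2 + f) ^ p - ((y + t) ^ a / 2 + f) ^ p
      = t * a * (e + 1 / a) * (c ^ (a - 1) * (c ^ a / 2 + f) ^ (p - 1)) := by rw [hS, hEq]
    _ ≤ t * a * (e + 1 / a) * ((y / 2) ^ (a - 1) * ((y / 2) ^ a / 2 + f) ^ (p - 1)) := by
        apply mul_le_mul_of_nonneg_left _ (by positivity)
        rw [hp1]; exact hh
    _ < 4 * a * (e + 1 / a) * ((y / 2) ^ a / 2 + f) ^ p * (t / y) := hmain
end

section
/- In the one-dimensional model Y|β ~ N(β,1) with the generalized bridge prior (β|γ,λ,α having density proportional to exp(−γλ|β|^α/2), λ mixture of Gamma(e,f) components with equal hyperparameters e₁=e₂=e, f₁=f₂=f, and α ~ Unif(k₁,k₂) with 0<k₁<k₂≤4), the marginal density m(y) satisfies lim_{|y|→∞} (d/dy) log m(y) = 0, and consequently |y − E(β|y)| is bounded in y. -/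
/-!
Up to a positive constant, `m` is the Gaussian smoothing `y ↦ ∫ φ(β - y) g(β) dβ`,
`φ(t) = exp(-t² / 2)`, of the prior density `g(β) = ∫_{k₁}^{k₂} w(α) (|β|^α / 2 + f)^(-e - 1/α) dα`,
so `(log m)'(y) = ∫ φ(t) t g(y + t) dt / ∫ φ(t) g(y + t) dt`.
Because `α ≤ 4`, scaling `|β|` by `c ≥ 1` scales `|β|^α / 2 + f` by at most `c⁴`. This gives both
a polynomial ratio bound `g(y + t) ≤ C (1 + |t|)^p g(y)` and `g(y + t) / g(y) → 1` as `y → ∞`.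
After dividing numerator and denominator by `g(y)`, the Gaussian dominates the polynomial
factor: dominated convergence gives the limit `∫ φ(t) t dt / ∫ φ = 0`, and the same domination
bounds the quotient for all `y`. Evenness of `g` gives the limit at `-∞`.
-/

open MeasureTheory Real Filter Set Topology

namespace TailRobustness

lemma one_add_abs_rpow_mul_exp_le {p b : ℝ} (hp : 0 ≤ p) (hb : 0 < b) (t : ℝ) :
    (1 + |t|) ^ p * exp (-b * t ^ 2) ≤ exp (p ^ 2 / (2 * b)) * exp (-(b / 2) * t ^ 2) := by
  have h_pow : (1 + |t|) ^ p ≤ exp (p * |t|) :=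
    calc (1 + |t|) ^ p ≤ exp |t| ^ p := by gcongr; linarith [add_one_le_exp |t|]
      _ = exp (p * |t|) := by rw [← exp_mul, mul_comm]
  have h_exponent : p * |t| + -b * t ^ 2 ≤ p ^ 2 / (2 * b) + -(b / 2) * t ^ 2 := by
    rw [← sq_abs t, div_add' _ _ _ (by positivity), le_div_iff₀ (by positivity)]
    nlinarith [sq_nonneg (p - b * |t|)]
  calc (1 + |t|) ^ p * exp (-b * t ^ 2) ≤ exp (p * |t|) * exp (-b * t ^ 2) := by gcongr
    _ ≤ exp (p ^ 2 / (2 * b)) * exp (-(b / 2) * t ^ 2) := by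
      rw [← exp_add, ← exp_add]; exact exp_le_exp.2 h_exponent

lemma integrable_one_add_abs_rpow_mul_exp {p b : ℝ} (hp : 0 ≤ p) (hb : 0 < b) :
    Integrable fun t : ℝ => (1 + |t|) ^ p * exp (-b * t ^ 2) := by
  refine ((integrable_exp_neg_mul_sq (half_pos hb)).const_mul (exp (p ^ 2 / (2 * b)))).mono' ?_ ?_
  · exact Continuous.aestronglyMeasurable (by fun_prop (disch := positivity))
  · refine Eventually.of_forall fun t => ?_
    rw [norm_of_nonneg (by positivity)]
    exact one_add_abs_rpow_mul_exp_le hp hb t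

lemma integrable_exp_neg_sq_div_two : Integrable fun t : ℝ => exp (-t ^ 2 / 2) := by
  simpa [neg_div, div_eq_inv_mul] using integrable_exp_neg_mul_sq (b := 1 / 2) (by norm_num)

lemma abs_mul_exp_le_of_abs_sub_lt_one {u v : ℝ} (h : |u - v| < 1) :
    |u| * exp (-u ^ 2 / 2) ≤ exp (1 / 2) * ((1 + |v|) * exp (-(1 / 4) * v ^ 2)) := by
  have h_abs : |u| ≤ 1 + |v| := by
    have := abs_sub_abs_le_abs_sub u v; linarith
  have h_sq : -u ^ 2 / 2 ≤ 1 / 2 + -(1 / 4) * v ^ 2 := by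
    have := abs_lt.1 h
    nlinarith [sq_nonneg (u + (u - v))]
  calc |u| * exp (-u ^ 2 / 2) ≤ (1 + |v|) * exp (1 / 2 + -(1 / 4) * v ^ 2) := by gcongr
    _ = exp (1 / 2) * ((1 + |v|) * exp (-(1 / 4) * v ^ 2)) := by rw [exp_add]; ring

section GaussianSmoothing

variable {g k : ℝ → ℝ} {C p : ℝ}

noncomputable def gaussSmooth (g : ℝ → ℝ) (y : ℝ) : ℝ := ∫ β, exp (-(β - y) ^ 2 / 2) * g β

noncomputable def gaussMoment (k g : ℝ → ℝ) (y : ℝ) : ℝ := ∫ t, exp (-t ^ 2 / 2) * k t * g (y + t)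

lemma integral_gauss_sub_eq_gaussMoment (k g : ℝ → ℝ) (y : ℝ) :
    ∫ β, exp (-(β - y) ^ 2 / 2) * k (β - y) * g β = gaussMoment k g y := by
  rw [gaussMoment, ← integral_add_left_eq_self _ y]
  simp only [add_sub_cancel_left]

lemma gaussSmooth_eq_gaussMoment (g : ℝ → ℝ) (y : ℝ) : gaussSmooth g y = gaussMoment 1 g y := by
  simpa [gaussSmooth] using integral_gauss_sub_eq_gaussMoment 1 g y

lemma norm_gaussMoment_integrand_le (hpos : ∀ y, 0 < g y)
    (hratio : ∀ y t, g (y + t) ≤ C * (1 + |t|) ^ p * g y) (hk : ∀ t, |k t| ≤ 1 + |t|) (y t : ℝ) :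
    ‖exp (-t ^ 2 / 2) * k t * g (y + t)‖ ≤
      C * ((1 + |t|) ^ (p + 1) * exp (-(1 / 2) * t ^ 2)) * g y := by
  have h_one_add : 0 < 1 + |t| := by positivity
  rw [norm_mul, norm_mul, norm_of_nonneg (exp_pos _).le, norm_of_nonneg (hpos _).le,
    rpow_add_one h_one_add.ne', norm_eq_abs]
  calc exp (-t ^ 2 / 2) * |k t| * g (y + t)
      ≤ exp (-t ^ 2 / 2) * (1 + |t|) * (C * (1 + |t|) ^ p * g y) := by
        gcongr
        · exact (hpos _).le
        · exact hk t
        · exact hratio y t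
    _ = C * ((1 + |t|) ^ p * (1 + |t|) * exp (-(1 / 2) * t ^ 2)) * g y := by ring_nf

lemma integrable_gaussMoment_integrand (hg : Continuous g) (hk_cont : Continuous k)
    (hpos : ∀ y, 0 < g y) (hp : 0 ≤ p) (hratio : ∀ y t, g (y + t) ≤ C * (1 + |t|) ^ p * g y)
    (hk : ∀ t, |k t| ≤ 1 + |t|) (y : ℝ) :
    Integrable fun t => exp (-t ^ 2 / 2) * k t * g (y + t) := by
  refine (((integrable_one_add_abs_rpow_mul_exp (p := p + 1) (by linarith)
    one_half_pos).const_mul C).mul_const (g y)).mono' (by fun_prop)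
    (Eventually.of_forall fun t => norm_gaussMoment_integrand_le hpos hratio hk y t)

lemma abs_gaussMoment_le (hpos : ∀ y, 0 < g y) (hp : 0 ≤ p)
    (hratio : ∀ y t, g (y + t) ≤ C * (1 + |t|) ^ p * g y) (hk : ∀ t, |k t| ≤ 1 + |t|) (y : ℝ) :
    |gaussMoment k g y| ≤
      C * (∫ t, (1 + |t|) ^ (p + 1) * exp (-(1 / 2) * t ^ 2)) * g y := by
  rw [← integral_const_mul, ← integral_mul_const]
  exact norm_integral_le_of_norm_le
    (((integrable_one_add_abs_rpow_mul_exp (by linarith) one_half_pos).const_mul C).mul_const _)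
    (Eventually.of_forall fun t => norm_gaussMoment_integrand_le hpos hratio hk y t)

lemma tendsto_gaussMoment_div (hg : Continuous g) (hk_cont : Continuous k)
    (hpos : ∀ y, 0 < g y) (hp : 0 ≤ p) (hratio : ∀ y t, g (y + t) ≤ C * (1 + |t|) ^ p * g y)
    (hk : ∀ t, |k t| ≤ 1 + |t|) (hlim : ∀ t, Tendsto (fun y => g (y + t) / g y) atTop (𝓝 1)) :
    Tendsto (fun y => gaussMoment k g y / g y) atTop (𝓝 (∫ t, exp (-t ^ 2 / 2) * k t)) := by
  have h_eq : ∀ y, gaussMoment k g y / g y =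
      ∫ t, exp (-t ^ 2 / 2) * k t * (g (y + t) / g y) := fun y => by
    simp only [gaussMoment, ← integral_div, mul_div_assoc]
  simp only [h_eq]
  refine tendsto_integral_filter_of_dominated_convergence
    (fun t => C * ((1 + |t|) ^ (p + 1) * exp (-(1 / 2) * t ^ 2)))
    (Eventually.of_forall fun y => by fun_prop) (Eventually.of_forall fun y => ?_)
    ((integrable_one_add_abs_rpow_mul_exp (by linarith) one_half_pos).const_mul C)
    (Eventually.of_forall fun t => by simpa using (hlim t).const_mul (exp (-t ^ 2 / 2) * k t))
  refine Eventually.of_forall fun t => ?_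
  rw [← mul_div_assoc, norm_div, norm_of_nonneg (hpos y).le, div_le_iff₀ (hpos y)]
  exact norm_gaussMoment_integrand_le hpos hratio hk y t

lemma exists_mul_le_gaussSmooth (hg : Continuous g) (hpos : ∀ y, 0 < g y) (hp : 0 ≤ p)
    (hratio : ∀ y t, g (y + t) ≤ C * (1 + |t|) ^ p * g y) :
    ∃ c > 0, ∀ y, c * g y ≤ gaussSmooth g y := by
  have hC : 1 ≤ C := by
    have := hratio 0 0
    simp only [add_zero, abs_zero, one_rpow, mul_one] at this
    exact (le_mul_iff_one_le_left (hpos 0)).1 this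
  have h_den : ∀ t : ℝ, 1 ≤ C * (1 + |t|) ^ p := fun t =>
    one_le_mul_of_one_le_of_one_le hC (one_le_rpow (by linarith [abs_nonneg t]) hp)
  set ψ : ℝ → ℝ := fun t => exp (-t ^ 2 / 2) / (C * (1 + |t|) ^ p)
  have hψ_cont : Continuous ψ :=
    Continuous.div (by fun_prop) (by fun_prop (disch := positivity))
      fun t => (zero_lt_one.trans_le (h_den t)).ne'
  have hψ_int : Integrable ψ :=
    integrable_exp_neg_sq_div_two.mono' hψ_cont.aestronglyMeasurable
      (Eventually.of_forall fun t => by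
        rw [norm_of_nonneg (by positivity)]
        exact div_le_self (exp_pos _).le (h_den t))
  refine ⟨∫ t, ψ t, integral_pos_of_integrable_nonneg_nonzero (x := 0) hψ_cont hψ_int
    (fun t => by positivity) (by positivity), fun y => ?_⟩
  rw [gaussSmooth_eq_gaussMoment, gaussMoment, ← integral_mul_const]
  refine integral_mono (hψ_int.mul_const _) (integrable_gaussMoment_integrand (k := 1) hg
    continuous_const hpos hp hratio (fun t => by simp) y) fun t => ?_
  have h_rev : g y ≤ C * (1 + |t|) ^ p * g (y + t) := by
    simpa using hratio (y + t) (-t)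
  calc ψ t * g y = exp (-t ^ 2 / 2) * (g y / (C * (1 + |t|) ^ p)) := by ring
    _ ≤ exp (-t ^ 2 / 2) * 1 * g (y + t) := by
      rw [mul_one]
      gcongr
      exact div_le_of_le_mul₀ (by positivity) (hpos _).le (by linarith)

lemma hasDerivAt_gaussSmooth (hg : Continuous g) (hpos : ∀ y, 0 < g y) (hp : 0 ≤ p)
    (hratio : ∀ y t, g (y + t) ≤ C * (1 + |t|) ^ p * g y) (y : ℝ) :
    HasDerivAt (gaussSmooth g) (gaussMoment id g y) y := by
  have h_int : Integrable fun β => exp (-(β - y) ^ 2 / 2) * g β := by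
    simpa using (integrable_gaussMoment_integrand (k := 1) hg continuous_const hpos hp hratio
      (fun t => by simp) y).comp_sub_right y
  have h_bound_int : Integrable fun β =>
      exp (1 / 2) * ((1 + |β - y|) ^ (p + 1) * exp (-(1 / 4) * (β - y) ^ 2)) * C * g y :=
    ((((integrable_one_add_abs_rpow_mul_exp (p := p + 1) (by linarith)
      (by norm_num : (0 : ℝ) < 1 / 4)).comp_sub_right y).const_mul _).mul_const _).mul_const _
  have h := hasDerivAt_integral_of_dominated_loc_of_deriv_le (μ := volume) (x₀ := y)
    (F := fun x β => exp (-(β - x) ^ 2 / 2) * g β)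
    (F' := fun x β => exp (-(β - x) ^ 2 / 2) * (β - x) * g β)
    (Metric.ball_mem_nhds y one_pos) (Eventually.of_forall fun x => by fun_prop) h_int
    (by fun_prop) (Eventually.of_forall fun β x hx => ?_) h_bound_int
    (Eventually.of_forall fun β x _ => ?_)
  · rw [← integral_gauss_sub_eq_gaussMoment]
    exact h.2
  · have h_ratio : g β ≤ C * (1 + |β - y|) ^ p * g y := by simpa using hratio y (β - y)
    have h_gauss := abs_mul_exp_le_of_abs_sub_lt_one (u := β - x) (v := β - y)
      (by rw [sub_sub_sub_cancel_left, ← Real.dist_eq, dist_comm]; exact hx)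
    rw [norm_mul, norm_mul, norm_of_nonneg (exp_pos _).le, norm_of_nonneg (hpos _).le,
      norm_eq_abs, rpow_add_one (by positivity)]
    calc exp (-(β - x) ^ 2 / 2) * |β - x| * g β
        ≤ exp (1 / 2) * ((1 + |β - y|) * exp (-(1 / 4) * (β - y) ^ 2)) *
          (C * (1 + |β - y|) ^ p * g y) := by
          rw [mul_comm (exp _)]; gcongr; exact (hpos _).le
      _ = _ := by ring
  · have h_exponent : HasDerivAt (fun x => -(β - x) ^ 2 / 2) (β - x) x :=
      ((((hasDerivAt_id x).const_sub β).pow 2).neg.div_const 2).congr_deriv (by simp)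
    exact h_exponent.exp.mul_const (g β)

lemma gaussSmooth_pos (hg : Continuous g) (hpos : ∀ y, 0 < g y) (hp : 0 ≤ p)
    (hratio : ∀ y t, g (y + t) ≤ C * (1 + |t|) ^ p * g y) (y : ℝ) : 0 < gaussSmooth g y := by
  obtain ⟨c, hc, hcg⟩ := exists_mul_le_gaussSmooth hg hpos hp hratio
  exact (mul_pos hc (hpos y)).trans_le (hcg y)

lemma deriv_log_gaussSmooth (hg : Continuous g) (hpos : ∀ y, 0 < g y) (hp : 0 ≤ p)
    (hratio : ∀ y t, g (y + t) ≤ C * (1 + |t|) ^ p * g y) (y : ℝ) :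
    deriv (fun z => log (gaussSmooth g z)) y = gaussMoment id g y / gaussSmooth g y :=
  ((hasDerivAt_gaussSmooth hg hpos hp hratio y).log
    (gaussSmooth_pos hg hpos hp hratio y).ne').deriv

lemma integral_exp_neg_sq_div_two_mul_id : ∫ t, exp (-t ^ 2 / 2) * id t = 0 := by
  have h := integral_neg_eq_self (fun t : ℝ => exp (-t ^ 2 / 2) * id t) volume
  simp only [id, neg_sq, mul_neg, integral_neg] at h ⊢
  linarith

theorem tendsto_deriv_log_gaussSmooth_atTop (hg : Continuous g) (hpos : ∀ y, 0 < g y)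
    (hp : 0 ≤ p) (hratio : ∀ y t, g (y + t) ≤ C * (1 + |t|) ^ p * g y)
    (hlim : ∀ t, Tendsto (fun y => g (y + t) / g y) atTop (𝓝 1)) :
    Tendsto (fun y => deriv (fun z => log (gaussSmooth g z)) y) atTop (𝓝 0) := by
  have h_num := tendsto_gaussMoment_div hg continuous_id hpos hp hratio
    (fun t => by simp) hlim
  have h_den := tendsto_gaussMoment_div (k := 1) hg continuous_const hpos hp hratio
    (fun t => by simp) hlim
  have h_den_pos : 0 < ∫ t, exp (-t ^ 2 / 2) * (1 : ℝ → ℝ) t := by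
    simpa using integral_exp_pos integrable_exp_neg_sq_div_two
  rw [integral_exp_neg_sq_div_two_mul_id] at h_num
  refine (zero_div (∫ t, exp (-t ^ 2 / 2) * (1 : ℝ → ℝ) t) ▸
    h_num.div h_den h_den_pos.ne').congr fun y => ?_
  rw [Pi.div_apply, deriv_log_gaussSmooth hg hpos hp hratio, gaussSmooth_eq_gaussMoment,
    div_div_div_cancel_right₀ (hpos y).ne']

theorem tendsto_deriv_log_gaussSmooth_atBot (hg : Continuous g) (hpos : ∀ y, 0 < g y)
    (hp : 0 ≤ p) (hratio : ∀ y t, g (y + t) ≤ C * (1 + |t|) ^ p * g y)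
    (hlim : ∀ t, Tendsto (fun y => g (y + t) / g y) atTop (𝓝 1)) (heven : ∀ β, g (-β) = g β) :
    Tendsto (fun y => deriv (fun z => log (gaussSmooth g z)) y) atBot (𝓝 0) := by
  have h_even : ∀ y, gaussSmooth g (-y) = gaussSmooth g y := fun y => by
    rw [gaussSmooth, ← integral_neg_eq_self]
    simp only [heven, gaussSmooth]
    congr 1; ext β; ring_nf
  have h_odd : ∀ y, deriv (fun z => log (gaussSmooth g z)) y =
      -deriv (fun z => log (gaussSmooth g z)) (-y) := fun y => by
    rw [← deriv_comp_neg]; simp only [h_even]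
  simpa [← h_odd] using
    ((tendsto_deriv_log_gaussSmooth_atTop hg hpos hp hratio hlim).comp
      tendsto_neg_atBot_atTop).neg

theorem exists_abs_deriv_log_gaussSmooth_le (hg : Continuous g) (hpos : ∀ y, 0 < g y)
    (hp : 0 ≤ p) (hratio : ∀ y t, g (y + t) ≤ C * (1 + |t|) ^ p * g y) :
    ∃ K, ∀ y, |deriv (fun z => log (gaussSmooth g z)) y| ≤ K := by
  obtain ⟨c, hc, hcg⟩ := exists_mul_le_gaussSmooth hg hpos hp hratio
  set A := C * ∫ t, (1 + |t|) ^ (p + 1) * exp (-(1 / 2) * t ^ 2)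
  have hA (y : ℝ) : |gaussMoment id g y| ≤ A * g y :=
    abs_gaussMoment_le hpos hp hratio (fun t => by simp) y
  have hA_nonneg : 0 ≤ A := (mul_nonneg_iff_of_pos_right (hpos 0)).1 ((abs_nonneg _).trans (hA 0))
  refine ⟨A / c, fun y => ?_⟩
  rw [deriv_log_gaussSmooth hg hpos hp hratio, abs_div,
    abs_of_pos (gaussSmooth_pos hg hpos hp hratio y),
    div_le_div_iff₀ (gaussSmooth_pos hg hpos hp hratio y) hc]
  calc |gaussMoment id g y| * c ≤ A * g y * c := by
        gcongr; exact hA y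
    _ = A * (c * g y) := by ring
    _ ≤ A * gaussSmooth g y := by gcongr; exact hcg y

end GaussianSmoothing

section BridgePrior

variable {e f k₁ k₂ a c u v : ℝ}

noncomputable def bridgeBase (f a u : ℝ) : ℝ := |u| ^ a / 2 + f

noncomputable def bridgeWeight (e f a : ℝ) : ℝ :=
  a / (2 ^ (1 / a + 1) * Gamma (1 / a)) * (f ^ e / Gamma e) * Gamma (e + 1 / a)

/-- The joint density of `(α, β)` after integrating out `λ`, up to the factor `1 / (k₂ - k₁)`. -/
noncomputable def bridgeJoint (e f a u : ℝ) : ℝ :=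
  bridgeWeight e f a * bridgeBase f a u ^ (-e - 1 / a)

noncomputable def bridgeDensity (e f k₁ k₂ u : ℝ) : ℝ := ∫ a in k₁..k₂, bridgeJoint e f a u

lemma bridgeBase_pos (hf : 0 < f) : 0 < bridgeBase f a u := by
  unfold bridgeBase; positivity

lemma bridgeBase_mono (ha : 0 ≤ a) (h : |u| ≤ |v|) : bridgeBase f a u ≤ bridgeBase f a v := by
  unfold bridgeBase; gcongr

lemma bridgeBase_le_pow_mul (hf : 0 ≤ f) (ha : 0 ≤ a) (ha4 : a ≤ 4) (hc : 1 ≤ c)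
    (h : |u| ≤ c * |v|) : bridgeBase f a u ≤ c ^ 4 * bridgeBase f a v := by
  have hc_pow : c ^ a ≤ c ^ 4 := by
    simpa using rpow_le_rpow_of_exponent_le hc ha4
  have h_rpow : |u| ^ a ≤ c ^ 4 * |v| ^ a :=
    calc |u| ^ a ≤ (c * |v|) ^ a := by gcongr
      _ = c ^ a * |v| ^ a := mul_rpow (by linarith) (abs_nonneg v)
      _ ≤ c ^ 4 * |v| ^ a := by gcongr
  have hf_le : f ≤ c ^ 4 * f := le_mul_of_one_le_left hf (one_le_pow₀ hc)
  unfold bridgeBase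
  linarith

lemma bridgeBase_abs_add_one_le (hf : 0 < f) (ha : 0 ≤ a) (ha4 : a ≤ 4) (v : ℝ) :
    bridgeBase f a (|v| + 1) ≤ (16 + 8 / f) * bridgeBase f a v := by
  have hf_le : f ≤ bridgeBase f a v := by
    unfold bridgeBase; linarith [rpow_nonneg (abs_nonneg v) a]
  rcases le_total |v| 1 with hv | hv
  · have h₁ := bridgeBase_le_pow_mul hf.le ha ha4 one_le_two (u := |v| + 1) (v := 1) (f := f)
      (by rw [abs_one, abs_of_nonneg (by positivity : (0 : ℝ) ≤ |v| + 1)]; linarith)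
    have h_one : bridgeBase f a 1 = 1 / 2 + f := by simp [bridgeBase]
    have : (16 + 8 / f) * f = 16 * f + 8 := by field_simp
    nlinarith
  · have h₁ := bridgeBase_le_pow_mul hf.le ha ha4 one_le_two (u := |v| + 1) (v := v) (f := f)
      (by rw [abs_of_nonneg (by positivity : (0 : ℝ) ≤ |v| + 1)]; linarith)
    have : 0 ≤ 8 / f * bridgeBase f a v := mul_nonneg (by positivity) (bridgeBase_pos hf).le
    nlinarith

lemma bridgeBase_le_mul_bridgeBase_add (hf : 0 < f) (ha : 0 ≤ a) (ha4 : a ≤ 4) (y t : ℝ) :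
    bridgeBase f a y ≤ (16 + 8 / f) * (1 + |t|) ^ 4 * bridgeBase f a (y + t) := by
  have h_abs : |y| ≤ (1 + |t|) * |(|y + t| + 1)| := by
    rw [abs_of_nonneg (by positivity : (0 : ℝ) ≤ |y + t| + 1)]
    have := abs_sub_abs_le_abs_sub y (-t)
    simp only [sub_neg_eq_add, abs_neg] at this
    nlinarith [abs_nonneg t, abs_nonneg (y + t)]
  calc bridgeBase f a y ≤ (1 + |t|) ^ 4 * bridgeBase f a (|y + t| + 1) :=
        bridgeBase_le_pow_mul hf.le ha ha4 (by linarith [abs_nonneg t]) h_abs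
    _ ≤ (1 + |t|) ^ 4 * ((16 + 8 / f) * bridgeBase f a (y + t)) := by
        gcongr; exact bridgeBase_abs_add_one_le hf ha ha4 _
    _ = _ := by ring

lemma bridgeWeight_pos (he : 0 < e) (hf : 0 < f) (ha : 0 < a) : 0 < bridgeWeight e f a := by
  have := Gamma_pos_of_pos (one_div_pos.2 ha)
  have := Gamma_pos_of_pos he
  have := Gamma_pos_of_pos (add_pos he (one_div_pos.2 ha))
  unfold bridgeWeight; positivity

lemma bridgeJoint_pos (he : 0 < e) (hf : 0 < f) (ha : 0 < a) : 0 < bridgeJoint e f a u :=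
  mul_pos (bridgeWeight_pos he hf ha) (rpow_pos_of_pos (bridgeBase_pos hf) _)

lemma bridgeJoint_le_of_bridgeBase_le (he : 0 < e) (hf : 0 < f) (hk₁ : 0 < k₁) (ha : k₁ ≤ a)
    (hc : 1 ≤ c) (h : bridgeBase f a u ≤ c * bridgeBase f a v) :
    bridgeJoint e f a v ≤ c ^ (e + 1 / k₁) * bridgeJoint e f a u := by
  have ha₀ : 0 < a := hk₁.trans_le ha
  have hc₀ : 0 < c := one_pos.trans_le hc
  have hs : 0 ≤ e + 1 / a := by positivity
  have hs_le : e + 1 / a ≤ e + 1 / k₁ := by gcongr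
  have h_kernel : bridgeBase f a v ^ (-e - 1 / a) ≤
      c ^ (e + 1 / k₁) * bridgeBase f a u ^ (-e - 1 / a) :=
    calc bridgeBase f a v ^ (-e - 1 / a) ≤ (bridgeBase f a u / c) ^ (-e - 1 / a) :=
          rpow_le_rpow_of_nonpos (div_pos (bridgeBase_pos hf) hc₀)
            (div_le_of_le_mul₀ hc₀.le (bridgeBase_pos hf).le (by linarith)) (by linarith)
      _ = c ^ (e + 1 / a) * bridgeBase f a u ^ (-e - 1 / a) := by
          rw [div_rpow (bridgeBase_pos hf).le hc₀.le, show -e - 1 / a = -(e + 1 / a) by ring,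
            rpow_neg hc₀.le]
          field_simp
      _ ≤ c ^ (e + 1 / k₁) * bridgeBase f a u ^ (-e - 1 / a) :=
          mul_le_mul_of_nonneg_right (rpow_le_rpow_of_exponent_le hc hs_le)
            (rpow_nonneg (bridgeBase_pos hf).le _)
  unfold bridgeJoint
  rw [mul_left_comm]
  exact mul_le_mul_of_nonneg_left h_kernel (bridgeWeight_pos he hf ha₀).le

lemma continuousAt_Gamma_of_pos {x : ℝ} (hx : 0 < x) : ContinuousAt Gamma x :=
  (differentiableAt_Gamma fun m => by linarith [(Nat.cast_nonneg m : (0 : ℝ) ≤ m)]).continuousAt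

lemma continuousOn_bridgeJoint (he : 0 < e) (hf : 0 < f) :
    ContinuousOn (fun p : ℝ × ℝ => bridgeJoint e f p.1 p.2) (Ioi 0 ×ˢ univ) := by
  rintro p ⟨ha, -⟩
  have ha : 0 < p.1 := ha
  have h_inv : ContinuousAt (fun q : ℝ × ℝ => 1 / q.1) p :=
    continuousAt_const.div continuousAt_fst ha.ne'
  have hΓ₁ : ContinuousAt (fun q : ℝ × ℝ => Gamma (1 / q.1)) p :=
    (continuousAt_Gamma_of_pos (by positivity)).comp h_inv
  have hΓ₂ : ContinuousAt (fun q : ℝ × ℝ => Gamma (e + 1 / q.1)) p :=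
    (continuousAt_Gamma_of_pos (by positivity)).comp (continuousAt_const.add h_inv)
  have h_two : ContinuousAt (fun q : ℝ × ℝ => (2 : ℝ) ^ (1 / q.1 + 1)) p :=
    continuousAt_const.rpow (h_inv.add continuousAt_const) (Or.inl two_ne_zero)
  have h_den : 2 ^ (1 / p.1 + 1) * Gamma (1 / p.1) ≠ 0 :=
    (mul_pos (by positivity) (Gamma_pos_of_pos (by positivity))).ne'
  have hΓe : Gamma e ≠ 0 := (Gamma_pos_of_pos he).ne'
  have h_base : ContinuousAt (fun q : ℝ × ℝ => bridgeBase f q.1 q.2) p :=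
    ((continuousAt_snd.abs.rpow continuousAt_fst (Or.inr ha)).div_const 2).add continuousAt_const
  have h_kernel : ContinuousAt (fun q : ℝ × ℝ => bridgeBase f q.1 q.2 ^ (-e - 1 / q.1)) p :=
    h_base.rpow (continuousAt_const.sub h_inv) (Or.inl (bridgeBase_pos hf).ne')
  unfold bridgeJoint bridgeWeight
  refine ContinuousAt.continuousWithinAt ?_
  fun_prop (disch := assumption)

lemma continuousOn_bridgeJoint_left (he : 0 < e) (hf : 0 < f) (u : ℝ) :
    ContinuousOn (fun a => bridgeJoint e f a u) (Ioi 0) :=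
  (continuousOn_bridgeJoint he hf).comp (continuousOn_id.prodMk continuousOn_const)
    fun _ ha => ⟨ha, trivial⟩

lemma continuous_bridgeJoint_right (he : 0 < e) (hf : 0 < f) (ha : 0 < a) :
    Continuous (bridgeJoint e f a) :=
  (continuousOn_bridgeJoint he hf).comp_continuous (continuous_const.prodMk continuous_id)
    fun _ => ⟨ha, trivial⟩

lemma bridgeJoint_le_bridgeJoint_zero (he : 0 < e) (hf : 0 < f) (ha : 0 < a) (u : ℝ) :
    bridgeJoint e f a u ≤ bridgeJoint e f a 0 := by
  unfold bridgeJoint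
  gcongr _ * ?_
  · exact (bridgeWeight_pos he hf ha).le
  · have : 0 < 1 / a := by positivity
    exact rpow_le_rpow_of_nonpos (bridgeBase_pos hf) (bridgeBase_mono ha.le (by simp))
      (by linarith)

lemma exists_bridgeJoint_le (he : 0 < e) (hf : 0 < f) (hk₁ : 0 < k₁) :
    ∃ B, ∀ a ∈ Icc k₁ k₂, ∀ u, bridgeJoint e f a u ≤ B := by
  obtain ⟨B, hB⟩ := isCompact_Icc.exists_bound_of_continuousOn
    ((continuousOn_bridgeJoint_left he hf 0).mono fun a ha => hk₁.trans_le ha.1)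
  exact ⟨B, fun a ha u => (bridgeJoint_le_bridgeJoint_zero he hf (hk₁.trans_le ha.1) u).trans
    ((le_abs_self _).trans (hB a ha))⟩

lemma intervalIntegrable_bridgeJoint (he : 0 < e) (hf : 0 < f) (hk₁ : 0 < k₁) (hk : k₁ ≤ k₂)
    (u : ℝ) : IntervalIntegrable (fun a => bridgeJoint e f a u) volume k₁ k₂ :=
  ((continuousOn_bridgeJoint_left he hf u).mono fun _ ha =>
    hk₁.trans_le (uIcc_of_le hk ▸ ha).1).intervalIntegrable

lemma bridgeDensity_pos (he : 0 < e) (hf : 0 < f) (hk₁ : 0 < k₁) (hk : k₁ < k₂) (u : ℝ) :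
    0 < bridgeDensity e f k₁ k₂ u :=
  intervalIntegral.intervalIntegral_pos_of_pos_on (intervalIntegrable_bridgeJoint he hf hk₁ hk.le u)
    (fun _ ha => bridgeJoint_pos he hf (hk₁.trans ha.1)) hk

lemma continuous_bridgeDensity (he : 0 < e) (hf : 0 < f) (hk₁ : 0 < k₁) (hk : k₁ ≤ k₂) :
    Continuous (bridgeDensity e f k₁ k₂) := by
  obtain ⟨B, hB⟩ := exists_bridgeJoint_le (k₂ := k₂) he hf hk₁
  refine intervalIntegral.continuous_of_dominated_interval (bound := fun _ => B)
    (fun u => (intervalIntegrable_iff.1 (intervalIntegrable_bridgeJoint he hf hk₁ hk u)).1)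
    (fun u => ae_of_all _ fun a ha => ?_) intervalIntegrable_const
    (ae_of_all _ fun a ha => continuous_bridgeJoint_right he hf ?_)
  · rw [uIoc_of_le hk] at ha
    rw [norm_of_nonneg (bridgeJoint_pos he hf (hk₁.trans ha.1)).le]
    exact hB a (Ioc_subset_Icc_self ha) u
  · rw [uIoc_of_le hk] at ha
    exact hk₁.trans ha.1

lemma bridgeDensity_le_of_bridgeBase_le (he : 0 < e) (hf : 0 < f) (hk₁ : 0 < k₁) (hk : k₁ ≤ k₂)
    (hc : 1 ≤ c) (h : ∀ a ∈ Icc k₁ k₂, bridgeBase f a u ≤ c * bridgeBase f a v) :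
    bridgeDensity e f k₁ k₂ v ≤ c ^ (e + 1 / k₁) * bridgeDensity e f k₁ k₂ u := by
  rw [bridgeDensity, bridgeDensity, ← intervalIntegral.integral_const_mul]
  exact intervalIntegral.integral_mono_on hk (intervalIntegrable_bridgeJoint he hf hk₁ hk v)
    ((intervalIntegrable_bridgeJoint he hf hk₁ hk u).const_mul _)
    fun a ha => bridgeJoint_le_of_bridgeBase_le he hf hk₁ ha.1 hc (h a ha)

lemma bridgeDensity_add_le (he : 0 < e) (hf : 0 < f) (hk₁ : 0 < k₁) (hk : k₁ ≤ k₂)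
    (hk₂ : k₂ ≤ 4) (y t : ℝ) :
    bridgeDensity e f k₁ k₂ (y + t) ≤
      (16 + 8 / f) ^ (e + 1 / k₁) * (1 + |t|) ^ (4 * (e + 1 / k₁)) * bridgeDensity e f k₁ k₂ y := by
  have h_one_add : 1 ≤ 1 + |t| := by linarith [abs_nonneg t]
  have h := bridgeDensity_le_of_bridgeBase_le he hf hk₁ hk
    (one_le_mul_of_one_le_of_one_le (by linarith [show 0 < 8 / f by positivity])
      (one_le_pow₀ h_one_add))
    fun a ha => bridgeBase_le_mul_bridgeBase_add hf (hk₁.le.trans ha.1) (ha.2.trans hk₂) y t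
  rwa [mul_rpow (by positivity) (by positivity), ← rpow_natCast, ← rpow_mul (by positivity),
    Nat.cast_ofNat] at h

lemma bridgeDensity_neg (u : ℝ) : bridgeDensity e f k₁ k₂ (-u) = bridgeDensity e f k₁ k₂ u := by
  simp [bridgeDensity, bridgeJoint, bridgeBase]

lemma abs_le_mul_abs_add_and_abs_add_le {y t : ℝ} (hy : 0 < y) (hyt : 2 * |t| ≤ y) :
    |y| ≤ (1 + 2 * |t| / y) * |y + t| ∧ |y + t| ≤ (1 + 2 * |t| / y) * |y| := by
  set c := 1 + 2 * |t| / y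
  have hcy : c * y = y + 2 * |t| := by simp only [c]; field_simp
  have hc₁ : 1 ≤ c := by simp only [c]; linarith [show 0 ≤ 2 * |t| / y by positivity]
  have hc₂ : c ≤ 2 := by simp only [c]; linarith [div_le_one_of_le₀ hyt hy.le]
  have h_lower : y - |t| ≤ |y + t| := by
    have := abs_sub_abs_le_abs_sub y (-t)
    rw [sub_neg_eq_add, abs_neg, abs_of_pos hy] at this; linarith
  have h_upper : |y + t| ≤ y + |t| := by
    have := abs_add_le y t
    rwa [abs_of_pos hy] at this
  rw [abs_of_pos hy]
  constructor
  · nlinarith [mul_le_mul_of_nonneg_left h_lower (zero_le_one.trans hc₁),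
      mul_le_mul_of_nonneg_right hc₂ (abs_nonneg t)]
  · linarith [abs_nonneg t]

lemma bridgeDensity_add_le_and_le (he : 0 < e) (hf : 0 < f) (hk₁ : 0 < k₁) (hk : k₁ ≤ k₂)
    (hk₂ : k₂ ≤ 4) {y t : ℝ} (hy : 0 < y) (hyt : 2 * |t| ≤ y) :
    bridgeDensity e f k₁ k₂ (y + t) ≤
        ((1 + 2 * |t| / y) ^ 4) ^ (e + 1 / k₁) * bridgeDensity e f k₁ k₂ y ∧
      bridgeDensity e f k₁ k₂ y ≤
        ((1 + 2 * |t| / y) ^ 4) ^ (e + 1 / k₁) * bridgeDensity e f k₁ k₂ (y + t) := by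
  have hc : 1 ≤ 1 + 2 * |t| / y := by linarith [show 0 ≤ 2 * |t| / y by positivity]
  obtain ⟨h₁, h₂⟩ := abs_le_mul_abs_add_and_abs_add_le hy hyt
  have h_base {u v : ℝ} (h : |u| ≤ (1 + 2 * |t| / y) * |v|) (a : ℝ) (ha : a ∈ Icc k₁ k₂) :=
    bridgeBase_le_pow_mul (f := f) hf.le (hk₁.le.trans ha.1) (ha.2.trans hk₂) hc h
  exact ⟨bridgeDensity_le_of_bridgeBase_le he hf hk₁ hk (one_le_pow₀ hc) (h_base h₁),
    bridgeDensity_le_of_bridgeBase_le he hf hk₁ hk (one_le_pow₀ hc) (h_base h₂)⟩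

lemma tendsto_bridgeDensity_add_div (he : 0 < e) (hf : 0 < f) (hk₁ : 0 < k₁) (hk : k₁ < k₂)
    (hk₂ : k₂ ≤ 4) (t : ℝ) :
    Tendsto (fun y => bridgeDensity e f k₁ k₂ (y + t) / bridgeDensity e f k₁ k₂ y) atTop (𝓝 1) := by
  set L : ℝ → ℝ := fun y => ((1 + 2 * |t| / y) ^ 4) ^ (e + 1 / k₁)
  have hL : Tendsto L atTop (𝓝 1) := by
    have : Tendsto (fun y : ℝ => 2 * |t| / y) atTop (𝓝 0) :=
      tendsto_const_nhds.div_atTop tendsto_id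
    simpa using ((this.const_add 1).pow 4).rpow_const (Or.inl (by norm_num))
  have hpos := bridgeDensity_pos he hf hk₁ hk
  have h_large : ∀ᶠ y in atTop, 0 < y ∧ 2 * |t| ≤ y :=
    (eventually_gt_atTop 0).and (eventually_ge_atTop _)
  refine tendsto_of_tendsto_of_tendsto_of_le_of_le' (by simpa using hL.inv₀ one_ne_zero) hL ?_ ?_
  · filter_upwards [h_large] with y ⟨hy, hyt⟩
    rw [le_div_iff₀ (hpos y), ← div_eq_inv_mul, div_le_iff₀' (by positivity)]
    exact (bridgeDensity_add_le_and_le he hf hk₁ hk.le hk₂ hy hyt).2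
  · filter_upwards [h_large] with y ⟨hy, hyt⟩
    rw [div_le_iff₀ (hpos y)]
    exact (bridgeDensity_add_le_and_le he hf hk₁ hk.le hk₂ hy hyt).1

lemma integrable_gauss_mul_bridgeJoint (he : 0 < e) (hf : 0 < f) (hk₁ : 0 < k₁) (hk : k₁ ≤ k₂)
    (y : ℝ) :
    Integrable (Function.uncurry fun a β => exp (-(β - y) ^ 2 / 2) * bridgeJoint e f a β)
      ((volume.restrict (uIoc k₁ k₂)).prod volume) := by
  obtain ⟨B, hB⟩ := exists_bridgeJoint_le (k₂ := k₂) he hf hk₁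
  have h_bound : Integrable (fun z : ℝ × ℝ => B * exp (-(z.2 - y) ^ 2 / 2))
      ((volume.restrict (Ioc k₁ k₂)).prod volume) :=
    (integrable_const B).mul_prod (integrable_exp_neg_sq_div_two.comp_sub_right y)
  have h_prod := Measure.prod_restrict (μ := (volume : Measure ℝ)) (ν := (volume : Measure ℝ))
    (Ioc k₁ k₂) univ
  rw [Measure.restrict_univ] at h_prod
  rw [uIoc_of_le hk, h_prod]
  rw [h_prod] at h_bound
  have h_set : MeasurableSet (Ioc k₁ k₂ ×ˢ (univ : Set ℝ)) := measurableSet_Ioc.prod .univ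
  refine h_bound.mono' (ContinuousOn.aestronglyMeasurable ?_ h_set)
    ((ae_restrict_iff' h_set).2 (Eventually.of_forall fun z hz => ?_))
  · exact (Continuous.continuousOn (by fun_prop)).mul ((continuousOn_bridgeJoint he hf).mono
      fun z hz => ⟨hk₁.trans hz.1.1, trivial⟩)
  · have ha : 0 < z.1 := hk₁.trans hz.1.1
    rw [Function.uncurry_apply_pair, norm_mul, norm_of_nonneg (exp_pos _).le,
      norm_of_nonneg (bridgeJoint_pos he hf ha).le, mul_comm]
    gcongr
    exact hB z.1 (Ioc_subset_Icc_self hz.1) z.2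

lemma marginal_eq_mul_gaussSmooth (he : 0 < e) (hf : 0 < f) (hk₁ : 0 < k₁) (hk : k₁ ≤ k₂)
    (y : ℝ) :
    (1 / (k₂ - k₁)) * ∫ a in k₁..k₂, ∫ β : ℝ,
      Real.exp (-(β - y) ^ 2 / 2) / Real.sqrt (2 * π) *
        (a / (2 ^ (1 / a + 1) * Real.Gamma (1 / a))) *
        (f ^ e / Real.Gamma e) * Real.Gamma (e + 1 / a) *
        (|β| ^ a / 2 + f) ^ (-e - 1 / a)
      = 1 / ((k₂ - k₁) * Real.sqrt (2 * π)) * gaussSmooth (bridgeDensity e f k₁ k₂) y := by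
  have h_inner (a : ℝ) : ∫ β : ℝ,
      Real.exp (-(β - y) ^ 2 / 2) / Real.sqrt (2 * π) *
        (a / (2 ^ (1 / a + 1) * Real.Gamma (1 / a))) *
        (f ^ e / Real.Gamma e) * Real.Gamma (e + 1 / a) *
        (|β| ^ a / 2 + f) ^ (-e - 1 / a)
      = (Real.sqrt (2 * π))⁻¹ * ∫ β, exp (-(β - y) ^ 2 / 2) * bridgeJoint e f a β := by
    rw [← integral_const_mul]
    congr 1; ext β
    unfold bridgeJoint bridgeWeight bridgeBase
    ring
  simp only [h_inner, intervalIntegral.integral_const_mul]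
  rw [intervalIntegral_integral_swap (integrable_gauss_mul_bridgeJoint he hf hk₁ hk y)]
  simp only [intervalIntegral.integral_const_mul]
  rw [gaussSmooth, one_div, one_div, mul_inv, mul_assoc]
  rfl

end BridgePrior

end TailRobustness

open TailRobustness in
theorem tail_robustness (e f k₁ k₂ : ℝ) (he : 0 < e) (hf : 0 < f) (hk1 : 0 < k₁)
    (hk : k₁ < k₂) (hk2 : k₂ ≤ 4) (m : ℝ → ℝ)
    (hm : ∀ y, m y = (1 / (k₂ - k₁)) * ∫ a in k₁..k₂, ∫ β : ℝ,
      Real.exp (-(β - y) ^ 2 / 2) / Real.sqrt (2 * π) *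
        (a / (2 ^ (1 / a + 1) * Real.Gamma (1 / a))) *
        (f ^ e / Real.Gamma e) * Real.Gamma (e + 1 / a) *
        (|β| ^ a / 2 + f) ^ (-e - 1 / a)) :
    Tendsto (fun y => deriv (fun z => Real.log (m z)) y) atTop (nhds 0) ∧
    Tendsto (fun y => deriv (fun z => Real.log (m z)) y) atBot (nhds 0) ∧
    ∃ C : ℝ, ∀ y : ℝ, |deriv (fun z => Real.log (m z)) y| ≤ C := by
  set g := bridgeDensity e f k₁ k₂
  have hg := continuous_bridgeDensity he hf hk1 hk.le
  have hpos := bridgeDensity_pos he hf hk1 hk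
  have hp : 0 ≤ 4 * (e + 1 / k₁) := by positivity
  have hratio := bridgeDensity_add_le he hf hk1 hk.le hk2
  have hlim := tendsto_bridgeDensity_add_div he hf hk1 hk hk2
  have hc : 0 < 1 / ((k₂ - k₁) * Real.sqrt (2 * π)) := by
    have := sub_pos.2 hk; positivity
  have h_deriv (y : ℝ) :
      deriv (fun z => log (m z)) y = deriv (fun z => log (gaussSmooth g z)) y := by
    have h_log : (fun z => log (m z)) =
        fun z => log (1 / ((k₂ - k₁) * Real.sqrt (2 * π))) + log (gaussSmooth g z) := by
      ext z
      rw [hm, marginal_eq_mul_gaussSmooth he hf hk1 hk.le,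
        log_mul hc.ne' (gaussSmooth_pos hg hpos hp hratio z).ne']
    rw [h_log, deriv_const_add]
  simp only [h_deriv]
  exact ⟨tendsto_deriv_log_gaussSmooth_atTop hg hpos hp hratio hlim,
    tendsto_deriv_log_gaussSmooth_atBot hg hpos hp hratio hlim bridgeDensity_neg,
    exists_abs_deriv_log_gaussSmooth_le hg hpos hp hratio⟩
end
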